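/- Let (X,T) be a topological dynamical system and d ≥ 1. If there exists a generating family for T of cardinality d (i.e. Mult(T) ≤ d), then there exists a continuous, injective, affine map Ψ : M(X) → ([0,1]^d)^ℤ satisfying Ψ ∘ T_* = σ_d ∘ Ψ, where affine means Ψ(tμ + (1−t)ν) = tΨ(μ) + (1−t)Ψ(ν) for all μ, ν ∈ M(X) and t ∈ [0,1]. -/

import Mathlib

open MeasureTheory

/-- Iterates of a homeomorphism, indexed by natural numbers. -/
def hiterN {X : Type*} [TopologicalSpace X] (T : X ≃ₜ X) : ℕ → (X ≃ₜ X)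
  | 0 => Homeomorph.refl X
  | n + 1 => (hiterN T n).trans T

/-- Iterates of a homeomorphism, indexed by integers. -/
def hiter {X : Type*} [TopologicalSpace X] (T : X ≃ₜ X) : ℤ → (X ≃ₜ X)
  | Int.ofNat n => hiterN T n
  | Int.negSucc n => (hiterN T (n + 1)).symm

/-- The set of all iterates `f ∘ Tⁿ` for `f ∈ F` and `n ∈ ℤ`. -/
def iterSet {X : Type*} [TopologicalSpace X] (T : X ≃ₜ X) (F : Set C(X, ℝ)) :
    Set C(X, ℝ) :=
  {h | ∃ f ∈ F, ∃ n : ℤ, h = f.comp (hiter T n : C(X, X))}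

/-- The pushforward action `T_*` induced by a homeomorphism `T` on the space of Borel
probability measures. -/
noncomputable def pushForward {X : Type*} [TopologicalSpace X] [MeasurableSpace X]
    [BorelSpace X] (T : X ≃ₜ X) (μ : ProbabilityMeasure X) : ProbabilityMeasure X :=
  μ.map (f := ⇑T) T.continuous.measurable.aemeasurable

/-- The convex combination `t μ + (1 - t) ν` of two Borel probability measures,
for `0 ≤ t ≤ 1`. -/
noncomputable def convComb {X : Type*} [MeasurableSpace X] (t : NNReal) (ht : t ≤ 1)
    (μ ν : ProbabilityMeasure X) : ProbabilityMeasure X :=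
  ⟨(t : ENNReal) • (μ : Measure X) + ((1 - t : NNReal) : ENNReal) • (ν : Measure X), by
    constructor
    rw [Measure.add_apply, Measure.smul_apply, Measure.smul_apply, measure_univ, measure_univ,
      smul_eq_mul, smul_eq_mul, mul_one, mul_one, ← ENNReal.coe_add,
      add_tsub_cancel_of_le ht, ENNReal.coe_one]⟩

/-!
Enumerate the generating family as `f₁, …, f_d` and send `μ` to the array of orbit integrals
`∫ fᵢ ∘ Tⁿ dμ`, pushed into `[0, 1]` coordinatewise by the affine map `r ↦ (r + cᵢ) / (2 cᵢ)`
with `cᵢ = ‖fᵢ‖ + 1`. Integration is affine and weak-* continuous in the measure, and it turns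
`T_*` into the shift. For injectivity, two measures with the same orbit integrals have integration
functionals that agree on the iterates `fᵢ ∘ Tⁿ`, hence on their dense span, hence on all of
`C(X)`; and continuous functions determine a finite Borel measure on a metric space.
-/

open Set

section Iterates

variable {X : Type*} [TopologicalSpace X] (T : X ≃ₜ X)

theorem hiterN_eq_pow (n : ℕ) : hiterN T n = T ^ n := by
  induction n with
  | zero => rfl
  | succ n ih => rw [pow_succ', ← ih]; rfl

theorem hiter_eq_zpow (n : ℤ) : hiter T n = T ^ n := by
  cases n with
  | ofNat n => exact hiterN_eq_pow T n
  | negSucc n => rw [zpow_negSucc, ← hiterN_eq_pow]; rfl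

theorem hiter_succ_apply (n : ℤ) (x : X) : hiter T (n + 1) x = hiter T n (T x) := by
  rw [hiter_eq_zpow, hiter_eq_zpow, zpow_add_one]; rfl

end Iterates

namespace ContinuousMap

variable {X : Type*} [TopologicalSpace X] [CompactSpace X] [MeasurableSpace X]
  [OpensMeasurableSpace X]

theorem integrable (g : C(X, ℝ)) (μ : Measure X) [IsFiniteMeasure μ] : Integrable g μ :=
  (BoundedContinuousFunction.mkOfCompact g).integrable μ

noncomputable def integralCLM (μ : Measure X) [IsFiniteMeasure μ] : C(X, ℝ) →L[ℝ] ℝ :=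
  LinearMap.mkContinuous
    { toFun g := ∫ x, g x ∂μ
      map_add' g h := integral_add (g.integrable μ) (h.integrable μ)
      map_smul' c g := integral_const_mul c _ }
    (μ.real univ) fun g => by
      simpa using (BoundedContinuousFunction.mkOfCompact g).norm_integral_le_mul_norm μ

end ContinuousMap

theorem MeasureTheory.ext_of_integral_eq_on_dense_span {X : Type*} [TopologicalSpace X]
    [CompactSpace X] [HasOuterApproxClosed X] [MeasurableSpace X] [BorelSpace X]
    {μ ν : Measure X} [IsFiniteMeasure μ] [IsFiniteMeasure ν] {S : Set C(X, ℝ)}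
    (hS : Dense (Submodule.span ℝ S : Set C(X, ℝ)))
    (h : ∀ g ∈ S, ∫ x, g x ∂μ = ∫ x, g x ∂ν) : μ = ν := by
  have hCLM : ContinuousMap.integralCLM μ = ContinuousMap.integralCLM ν :=
    ContinuousLinearMap.ext_on hS h
  exact ext_of_forall_integral_eq_of_IsFiniteMeasure fun g => congr($hCLM g.toContinuousMap)

section MeasureActions

variable {X E : Type*} [MeasurableSpace X] [NormedAddCommGroup E] [NormedSpace ℝ E]

theorem integral_convComb (t : NNReal) (ht : t ≤ 1) (μ ν : ProbabilityMeasure X) {g : X → E}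
    (hμ : Integrable g μ) (hν : Integrable g ν) :
    ∫ x, g x ∂(convComb t ht μ ν) = (t : ℝ) • ∫ x, g x ∂μ + (1 - (t : ℝ)) • ∫ x, g x ∂ν := by
  change ∫ x, g x ∂((t : ENNReal) • (μ : Measure X) + ((1 - t : NNReal) : ENNReal) •
    (ν : Measure X)) = _
  rw [integral_add_measure (hμ.smul_measure ENNReal.coe_ne_top)
    (hν.smul_measure ENNReal.coe_ne_top), integral_smul_measure, integral_smul_measure,
    ENNReal.coe_toReal, ENNReal.coe_toReal, NNReal.coe_sub ht, NNReal.coe_one]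

theorem integral_pushForward [TopologicalSpace X] [BorelSpace X] (T : X ≃ₜ X)
    (μ : ProbabilityMeasure X) (g : X → E) :
    ∫ x, g x ∂(pushForward T μ) = ∫ x, g (T x) ∂μ := by
  rw [pushForward, ProbabilityMeasure.toMeasure_map]
  exact T.isClosedEmbedding.integral_map g

end MeasureActions

noncomputable def unitScale (c r : ℝ) : ℝ := (r + c) / (2 * c)

theorem unitScale_mem_unitInterval {c r : ℝ} (h : |r| ≤ c) : unitScale c r ∈ unitInterval := by
  obtain ⟨hlo, hhi⟩ := abs_le.mp h
  exact ⟨div_nonneg (by linarith) (by linarith), div_le_one_of_le₀ (by linarith) (by linarith)⟩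

theorem unitScale_injective {c : ℝ} (hc : c ≠ 0) : Function.Injective (unitScale c) := by
  intro r s h
  simpa [unitScale, hc] using h

@[fun_prop]
theorem continuous_unitScale (c : ℝ) : Continuous (unitScale c) := by
  unfold unitScale; fun_prop

theorem unitScale_convexComb (c t r s : ℝ) :
    unitScale c (t * r + (1 - t) * s) = t * unitScale c r + (1 - t) * unitScale c s := by
  unfold unitScale; ring

section OrbitIntegrals

variable {X ι : Type*} [TopologicalSpace X] [MeasurableSpace X] (T : X ≃ₜ X) (f : ι → C(X, ℝ))

noncomputable def orbitIntegral (μ : ProbabilityMeasure X) (n : ℤ) (i : ι) : ℝ :=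
  ∫ x, f i (hiter T n x) ∂μ

theorem orbitIntegral_pushForward [BorelSpace X] (μ : ProbabilityMeasure X) :
    orbitIntegral T f (pushForward T μ) = fun n => orbitIntegral T f μ (n + 1) := by
  funext n i
  simp only [orbitIntegral, integral_pushForward, hiter_succ_apply]

variable [CompactSpace X]

theorem abs_orbitIntegral_le (μ : ProbabilityMeasure X) (n : ℤ) (i : ι) :
    |orbitIntegral T f μ n i| ≤ ‖f i‖ := by
  simpa [orbitIntegral] using norm_integral_le_of_norm_le_const (μ := (μ : Measure X))
    (.of_forall fun x => (f i).norm_coe_le_norm (hiter T n x))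

theorem orbitIntegral_injective [HasOuterApproxClosed X] [BorelSpace X]
    (hf : Dense (Submodule.span ℝ (iterSet T (range f)) : Set C(X, ℝ))) :
    Function.Injective (orbitIntegral T f) := by
  intro μ ν h
  apply ProbabilityMeasure.toMeasure_injective
  refine ext_of_integral_eq_on_dense_span hf ?_
  rintro _ ⟨_, ⟨i, rfl⟩, n, rfl⟩
  exact congr_fun₂ h n i

variable [OpensMeasurableSpace X]

theorem orbitIntegral_convComb (t : NNReal) (ht : t ≤ 1) (μ ν : ProbabilityMeasure X)
    (n : ℤ) (i : ι) :
    orbitIntegral T f (convComb t ht μ ν) n i =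
      t * orbitIntegral T f μ n i + (1 - t) * orbitIntegral T f ν n i :=
  integral_convComb t ht μ ν (((f i).comp (hiter T n : C(X, X))).integrable μ)
    (((f i).comp (hiter T n : C(X, X))).integrable ν)

@[fun_prop]
theorem continuous_orbitIntegral : Continuous (orbitIntegral T f) :=
  continuous_pi fun n => continuous_pi fun i =>
    ProbabilityMeasure.continuous_integral_continuousMap ((f i).comp (hiter T n : C(X, X)))

end OrbitIntegrals

theorem affine_embedding_of_generating_family_general
    {X : Type*} [MetricSpace X] [CompactSpace X] [MeasurableSpace X] [BorelSpace X]
    (T : X ≃ₜ X) (d : ℕ)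
    (hgen : ∃ F : Finset C(X, ℝ), F.card = d ∧
      Dense (Submodule.span ℝ (iterSet T (F : Set C(X, ℝ))) : Set C(X, ℝ))) :
    ∃ Ψ : ProbabilityMeasure X → (ℤ → Fin d → unitInterval),
      Continuous Ψ ∧ Function.Injective Ψ ∧
      (∀ μ : ProbabilityMeasure X, Ψ (pushForward T μ) = fun n => Ψ μ (n + 1)) ∧
      (∀ (μ ν : ProbabilityMeasure X) (t : NNReal) (ht : t ≤ 1) (n : ℤ) (i : Fin d),
        (Ψ (convComb t ht μ ν) n i : ℝ)
          = (t : ℝ) * (Ψ μ n i : ℝ) + (1 - (t : ℝ)) * (Ψ ν n i : ℝ)) := by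
  obtain ⟨F, hcard, hdense⟩ := hgen
  let e : Fin d ≃ F := (F.equivFin.trans (finCongr hcard)).symm
  let f : Fin d → C(X, ℝ) := fun i => e i
  have hf : range f = F := by
    rw [show f = Subtype.val ∘ e from rfl, e.surjective.range_comp, Subtype.range_coe]
  rw [← hf] at hdense
  have hbound (μ n i) : |orbitIntegral T f μ n i| ≤ ‖f i‖ + 1 :=
    (abs_orbitIntegral_le T f μ n i).trans (le_add_of_nonneg_right zero_le_one)
  refine ⟨fun μ n i => ⟨unitScale (‖f i‖ + 1) (orbitIntegral T f μ n i),
    unitScale_mem_unitInterval (hbound μ n i)⟩, ?_, ?_, ?_, ?_⟩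
  · fun_prop
  · intro μ ν h
    refine orbitIntegral_injective T f hdense (funext₂ fun n i => ?_)
    exact unitScale_injective (by positivity) congr(($h n i : ℝ))
  · intro μ
    simp only [orbitIntegral_pushForward]
  · intro μ ν t ht n i
    exact (congrArg _ (orbitIntegral_convComb T f t ht μ ν n i)).trans (unitScale_convexComb ..)

/-- If a topological dynamical system `(X, T)` admits a generating family of cardinality
`d ≥ 1` (i.e. `Mult(T) ≤ d`), then the induced system `(M(X), T_*)` embeds affinely and
equivariantly in the cubical shift `(([0,1]^d)^ℤ, σ_d)`. -/
theorem affine_embedding_of_generating_family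
    {X : Type*} [MetricSpace X] [CompactSpace X] [MeasurableSpace X] [BorelSpace X]
    (T : X ≃ₜ X) (d : ℕ) (hd : 1 ≤ d)
    (hgen : ∃ F : Finset C(X, ℝ), F.card = d ∧
      Dense (Submodule.span ℝ (iterSet T (F : Set C(X, ℝ))) : Set C(X, ℝ))) :
    ∃ Ψ : ProbabilityMeasure X → (ℤ → Fin d → unitInterval),
      Continuous Ψ ∧ Function.Injective Ψ ∧
      (∀ μ : ProbabilityMeasure X, Ψ (pushForward T μ) = fun n => Ψ μ (n + 1)) ∧
      (∀ (μ ν : ProbabilityMeasure X) (t : NNReal) (ht : t ≤ 1) (n : ℤ) (i : Fin d),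
        (Ψ (convComb t ht μ ν) n i : ℝ)
          = (t : ℝ) * (Ψ μ n i : ℝ) + (1 - (t : ℝ)) * (Ψ ν n i : ℝ)) :=
  affine_embedding_of_generating_family_general T d hgen
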